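/- Fix γ_l, γ_r > 2 and let B(a,b) = Γ(a)Γ(b)/Γ(a+b) denote the Beta function. Let K be a compact subset of the open region {(π_l, π_r, k_l, k_r) ∈ ℝ⁴ : 0 < π_l, 0 < π_r, π_l + π_r < 1, 0 < k_l < 1, 0 < k_r < 1}, and for p = (π_l, π_r, k_l, k_r) ∈ K let b_p(u) = 1 + (π_l B(k_l, γ_l)^{-1} u^{k_l-1}(1-u)^{γ_l-1} + π_r B(γ_r, k_r)^{-1} u^{γ_r-1}(1-u)^{k_r-1}) / (1 - π_l - π_r) for u ∈ (0,1), with unique minimizer u*_p. Then for every η > 0 there exists ε > 0 such that for all p ∈ K, the Lebesgue measure of the set {u ∈ (0,1) : b_p(u) < b_p(u*_p) + ε} is less than η. -/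

import Mathlib

open Set Filter MeasureTheory

/-- The Beta function `B(a,b) = Γ(a)Γ(b)/Γ(a+b)`. -/
noncomputable def betaFn (a b : ℝ) : ℝ := Real.Gamma a * Real.Gamma b / Real.Gamma (a + b)

/-- The open parameter region `{(π_l, π_r, k_l, k_r) : 0 < π_l, 0 < π_r, π_l + π_r < 1,
0 < k_l < 1, 0 < k_r < 1}`. -/
def paramRegion : Set (ℝ × ℝ × ℝ × ℝ) :=
  {p | 0 < p.1 ∧ 0 < p.2.1 ∧ p.1 + p.2.1 < 1 ∧
    0 < p.2.2.1 ∧ p.2.2.1 < 1 ∧ 0 < p.2.2.2 ∧ p.2.2.2 < 1}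

/-- The reciprocal assessor `b_p(u)` of the working beta-mixture model with parameters
`p = (π_l, π_r, k_l, k_r)` and fixed shape parameters `γ_l, γ_r`. -/
noncomputable def bAssessor (γl γr : ℝ) (p : ℝ × ℝ × ℝ × ℝ) (u : ℝ) : ℝ :=
  1 + (p.1 * (betaFn p.2.2.1 γl)⁻¹ * u ^ (p.2.2.1 - 1) * (1 - u) ^ (γl - 1)
    + p.2.1 * (betaFn γr p.2.2.2)⁻¹ * u ^ (γr - 1) * (1 - u) ^ (p.2.2.2 - 1))
    / (1 - p.1 - p.2.1)

/-! ### Auxiliary definitions and lemmas -/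

noncomputable def Fab (a b u : ℝ) : ℝ := u ^ a * (1 - u) ^ b
noncomputable def D1ab (a b u : ℝ) : ℝ := a * Fab (a-1) b u - b * Fab a (b-1) u
noncomputable def D2ab (a b u : ℝ) : ℝ := a * D1ab (a-1) b u - b * D1ab a (b-1) u

noncomputable def clFn (γl : ℝ) (p : ℝ × ℝ × ℝ × ℝ) : ℝ :=
  p.1 * (betaFn p.2.2.1 γl)⁻¹ / (1 - p.1 - p.2.1)

noncomputable def crFn (γr : ℝ) (p : ℝ × ℝ × ℝ × ℝ) : ℝ :=
  p.2.1 * (betaFn γr p.2.2.2)⁻¹ / (1 - p.1 - p.2.1)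

lemma Fab_pos {a b u : ℝ} (hu : 0 < u) (hu1 : u < 1) : 0 < Fab a b u :=
  mul_pos (Real.rpow_pos_of_pos hu a) (Real.rpow_pos_of_pos (by linarith) b)

lemma hasDerivAt_Fab (a b : ℝ) {u : ℝ} (hu : 0 < u) (hu1 : u < 1) :
    HasDerivAt (fun x => Fab a b x) (D1ab a b u) u := by
  have h1 : HasDerivAt (fun x : ℝ => x ^ a) (a * u ^ (a-1)) u :=
    Real.hasDerivAt_rpow_const (Or.inl hu.ne')
  have h0 : HasDerivAt (fun x : ℝ => 1 - x) (-1) u := by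
    simpa using (hasDerivAt_id u).const_sub (1:ℝ)
  have h2 : HasDerivAt (fun x : ℝ => (1 - x) ^ b) ((-1) * b * (1-u) ^ (b-1)) u :=
    h0.rpow_const (Or.inl (by intro h; rw [sub_eq_zero] at h; exact absurd h.symm hu1.ne))
  have := h1.mul h2
  simp only [Fab, D1ab]
  exact this.congr_deriv (by ring)

lemma hasDerivAt_D1ab (a b : ℝ) {u : ℝ} (hu : 0 < u) (hu1 : u < 1) :
    HasDerivAt (fun x => D1ab a b x) (D2ab a b u) u := by
  have := ((hasDerivAt_Fab (a-1) b hu hu1).const_mul a).sub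
    ((hasDerivAt_Fab a (b-1) hu hu1).const_mul b)
  simp only [D1ab, D2ab]
  exact this

lemma D2ab_nonneg {a b u : ℝ} (h : (a ≤ 0 ∧ 1 ≤ b) ∨ (1 ≤ a ∧ b ≤ 0))
    (hu : 0 < u) (hu1 : u < 1) : 0 ≤ D2ab a b u := by
  have hA : 0 < Fab (a-1-1) b u := Fab_pos hu hu1
  have hB : 0 < Fab (a-1) (b-1) u := Fab_pos hu hu1
  have hC : 0 < Fab a (b-1-1) u := Fab_pos hu hu1
  have t1 : 0 ≤ a * (a-1) := by rcases h with ⟨ha, hb⟩ | ⟨ha, hb⟩ <;> nlinarith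
  have t2 : 0 ≤ -(a*b) := by rcases h with ⟨ha, hb⟩ | ⟨ha, hb⟩ <;> nlinarith
  have t3 : 0 ≤ b * (b-1) := by rcases h with ⟨ha, hb⟩ | ⟨ha, hb⟩ <;> nlinarith
  simp only [D2ab, D1ab]
  nlinarith [mul_nonneg t1 hA.le, mul_nonneg t2 hB.le, mul_nonneg t3 hC.le]

lemma D2ab_ge_left {a b u : ℝ} (ha : a ≤ 0) (hb : 1 ≤ b) (hu : 0 < u) (hu2 : u ≤ 1/2) :
    (-a) * (2:ℝ)⁻¹ ^ b ≤ D2ab a b u := by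
  have hu1 : u < 1 := by linarith
  have hB : 0 < Fab (a-1) (b-1) u := Fab_pos hu hu1
  have hC : 0 < Fab a (b-1-1) u := Fab_pos hu hu1
  have hA0 : 0 < Fab (a-1-1) b u := Fab_pos hu hu1
  have hx : (1:ℝ) ≤ u ^ (a-1-1) :=
    Real.one_le_rpow_of_pos_of_le_one_of_nonpos hu (by linarith) (by linarith)
  have hy : (2:ℝ)⁻¹ ^ b ≤ (1-u) ^ b :=
    Real.rpow_le_rpow (by norm_num) (by linarith) (by linarith)
  have hA : (2:ℝ)⁻¹ ^ b ≤ Fab (a-1-1) b u := by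
    have := mul_le_mul hx hy (Real.rpow_nonneg (by norm_num) b) (by linarith)
    simpa [Fab] using this
  have t1 : (-a) * ((2:ℝ)⁻¹ ^ b) ≤ (a*(a-1)) * Fab (a-1-1) b u := by
    have h1 : (-a) * ((2:ℝ)⁻¹ ^ b) ≤ (-a) * Fab (a-1-1) b u :=
      mul_le_mul_of_nonneg_left hA (by linarith)
    nlinarith [mul_nonneg (mul_self_nonneg a) hA0.le]
  have t2 : 0 ≤ (-(a*b)) * Fab (a-1) (b-1) u := mul_nonneg (by nlinarith) hB.le
  have t3 : 0 ≤ (b*(b-1)) * Fab a (b-1-1) u := mul_nonneg (by nlinarith) hC.le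
  simp only [D2ab, D1ab]
  nlinarith [t1, t2, t3]

lemma D2ab_ge_right {a b u : ℝ} (ha : 1 ≤ a) (hb : b ≤ 0) (hu2 : 1/2 ≤ u) (hu1 : u < 1) :
    (-b) * (2:ℝ)⁻¹ ^ a ≤ D2ab a b u := by
  have hu : 0 < u := by linarith
  have hB : 0 < Fab (a-1) (b-1) u := Fab_pos hu hu1
  have hA : 0 < Fab (a-1-1) b u := Fab_pos hu hu1
  have hC0 : 0 < Fab a (b-1-1) u := Fab_pos hu hu1
  have hx : (1:ℝ) ≤ (1-u) ^ (b-1-1) :=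
    Real.one_le_rpow_of_pos_of_le_one_of_nonpos (by linarith) (by linarith) (by linarith)
  have hy : (2:ℝ)⁻¹ ^ a ≤ u ^ a :=
    Real.rpow_le_rpow (by norm_num) (by linarith) (by linarith)
  have hC : (2:ℝ)⁻¹ ^ a ≤ Fab a (b-1-1) u := by
    have := mul_le_mul hy hx (by norm_num) (Real.rpow_nonneg hu.le a)
    simpa [Fab] using this
  have t3 : (-b) * ((2:ℝ)⁻¹ ^ a) ≤ (b*(b-1)) * Fab a (b-1-1) u := by
    have h1 : (-b) * ((2:ℝ)⁻¹ ^ a) ≤ (-b) * Fab a (b-1-1) u :=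
      mul_le_mul_of_nonneg_left hC (by linarith)
    nlinarith [mul_nonneg (mul_self_nonneg b) hC0.le]
  have t2 : 0 ≤ (-(a*b)) * Fab (a-1) (b-1) u := mul_nonneg (by nlinarith) hB.le
  have t1 : 0 ≤ (a*(a-1)) * Fab (a-1-1) b u := mul_nonneg (by nlinarith) hA.le
  simp only [D2ab, D1ab]
  nlinarith [t1, t2, t3]

lemma betaFn_pos {a b : ℝ} (ha : 0 < a) (hb : 0 < b) : 0 < betaFn a b :=
  div_pos (mul_pos (Real.Gamma_pos_of_pos ha) (Real.Gamma_pos_of_pos hb))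
    (Real.Gamma_pos_of_pos (by linarith))

lemma bAssessor_eq (γl γr : ℝ) (p : ℝ × ℝ × ℝ × ℝ) (u : ℝ) :
    bAssessor γl γr p u =
      1 + (clFn γl p * Fab (p.2.2.1 - 1) (γl - 1) u
        + crFn γr p * Fab (γr - 1) (p.2.2.2 - 1) u) := by
  simp only [bAssessor, clFn, crFn, Fab]
  ring

lemma continuousAt_Gamma_of_pos {x : ℝ} (hx : 0 < x) : ContinuousAt Real.Gamma x :=
  (Real.differentiableAt_Gamma (fun m => by
    have : (0:ℝ) ≤ m := Nat.cast_nonneg m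
    intro h; rw [h] at hx; linarith)).continuousAt

lemma continuousOn_clFn (γl : ℝ) (hγ : 0 < γl) (K : Set (ℝ × ℝ × ℝ × ℝ))
    (hKsub : K ⊆ paramRegion) : ContinuousOn (clFn γl) K := by
  intro p hp
  obtain ⟨h1, h2, h3, h4, h5, h6, h7⟩ := hKsub hp
  apply ContinuousAt.continuousWithinAt
  have hproj : Continuous fun q : ℝ × ℝ × ℝ × ℝ => q.2.2.1 :=
    continuous_fst.comp (continuous_snd.comp continuous_snd)
  have hbeta : ContinuousAt (fun q : ℝ × ℝ × ℝ × ℝ => betaFn q.2.2.1 γl) p := by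
    have hG1 : ContinuousAt (fun q : ℝ × ℝ × ℝ × ℝ => Real.Gamma q.2.2.1) p :=
      ContinuousAt.comp (g := Real.Gamma) (f := fun q : ℝ × ℝ × ℝ × ℝ => q.2.2.1)
        (continuousAt_Gamma_of_pos h4) hproj.continuousAt
    have hG2 : ContinuousAt (fun q : ℝ × ℝ × ℝ × ℝ => Real.Gamma (q.2.2.1 + γl)) p :=
      ContinuousAt.comp (g := Real.Gamma) (f := fun q : ℝ × ℝ × ℝ × ℝ => q.2.2.1 + γl)
        (continuousAt_Gamma_of_pos (by linarith : (0:ℝ) < p.2.2.1 + γl))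
        ((hproj.add continuous_const).continuousAt)
    exact (hG1.mul continuousAt_const).div hG2
      (Real.Gamma_pos_of_pos (by linarith : (0:ℝ) < p.2.2.1 + γl)).ne'
  exact (continuous_fst.continuousAt.mul
    (hbeta.inv₀ (betaFn_pos h4 hγ).ne')).div
    (((continuous_const.sub continuous_fst).sub
      (continuous_fst.comp continuous_snd)).continuousAt)
    (show (1 : ℝ) - p.1 - p.2.1 ≠ 0 from by linarith)

lemma continuousOn_crFn (γr : ℝ) (hγ : 0 < γr) (K : Set (ℝ × ℝ × ℝ × ℝ))
    (hKsub : K ⊆ paramRegion) : ContinuousOn (crFn γr) K := by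
  intro p hp
  obtain ⟨h1, h2, h3, h4, h5, h6, h7⟩ := hKsub hp
  apply ContinuousAt.continuousWithinAt
  have hproj : Continuous fun q : ℝ × ℝ × ℝ × ℝ => q.2.2.2 :=
    continuous_snd.comp (continuous_snd.comp continuous_snd)
  have hbeta : ContinuousAt (fun q : ℝ × ℝ × ℝ × ℝ => betaFn γr q.2.2.2) p := by
    have hG1 : ContinuousAt (fun q : ℝ × ℝ × ℝ × ℝ => Real.Gamma q.2.2.2) p :=
      ContinuousAt.comp (g := Real.Gamma) (f := fun q : ℝ × ℝ × ℝ × ℝ => q.2.2.2)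
        (continuousAt_Gamma_of_pos h6) hproj.continuousAt
    have hG2 : ContinuousAt (fun q : ℝ × ℝ × ℝ × ℝ => Real.Gamma (γr + q.2.2.2)) p :=
      ContinuousAt.comp (g := Real.Gamma) (f := fun q : ℝ × ℝ × ℝ × ℝ => γr + q.2.2.2)
        (continuousAt_Gamma_of_pos (by linarith : (0:ℝ) < γr + p.2.2.2))
        ((continuous_const.add hproj).continuousAt)
    exact (continuousAt_const.mul hG1).div hG2
      (Real.Gamma_pos_of_pos (by linarith : (0:ℝ) < γr + p.2.2.2)).ne'
  exact ((continuous_fst.comp continuous_snd).continuousAt.mul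
    (hbeta.inv₀ (betaFn_pos hγ h6).ne')).div
    (((continuous_const.sub continuous_fst).sub
      (continuous_fst.comp continuous_snd)).continuousAt)
    (show (1 : ℝ) - p.1 - p.2.1 ≠ 0 from by linarith)

lemma strong_min_bound (g g' g'' : ℝ → ℝ) (lam : ℝ) (hlam : 0 ≤ lam)
    (hd1 : ∀ u ∈ Set.Ioo (0:ℝ) 1, HasDerivAt g (g' u) u)
    (hd2 : ∀ u ∈ Set.Ioo (0:ℝ) 1, HasDerivAt g' (g'' u) u)
    (hlow : ∀ u ∈ Set.Ioo (0:ℝ) 1, lam ≤ g'' u)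
    {ustar : ℝ} (hus : ustar ∈ Set.Ioo (0:ℝ) 1)
    (hmin : ∀ u ∈ Set.Ioo (0:ℝ) 1, u ≠ ustar → g ustar < g u)
    {r : ℝ} (hr : 0 < r) :
    ∀ u ∈ Set.Ioo (0:ℝ) 1, r ≤ |u - ustar| → g ustar + lam * r^2 / 4 ≤ g u := by
  have hminle : ∀ v ∈ Set.Ioo (0:ℝ) 1, g ustar ≤ g v := by
    intro v hv
    by_cases hveq : v = ustar
    · simp [hveq]
    · exact (hmin v hv hveq).le
  have hg'0 : g' ustar = 0 := by
    have hloc : IsLocalMin g ustar := by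
      filter_upwards [isOpen_Ioo.mem_nhds hus] with x hx using hminle x hx
    exact hloc.hasDerivAt_eq_zero (hd1 ustar hus)
  have hcont : ∀ x y : ℝ, 0 < x → y < 1 → ContinuousOn g (Set.Icc x y) := by
    intro x y hx hy z hz
    exact (hd1 z ⟨lt_of_lt_of_le hx hz.1, lt_of_le_of_lt hz.2 hy⟩).continuousAt.continuousWithinAt
  have hcont' : ∀ x y : ℝ, 0 < x → y < 1 → ContinuousOn g' (Set.Icc x y) := by
    intro x y hx hy z hz
    exact (hd2 z ⟨lt_of_lt_of_le hx hz.1, lt_of_le_of_lt hz.2 hy⟩).continuousAt.continuousWithinAt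
  intro u hu habs
  obtain ⟨hu0, hu1⟩ := hu
  obtain ⟨hus0, hus1⟩ := hus
  rcases le_abs.mp habs with h | h
  · -- ustar + r ≤ u
    set v := ustar + r/2 with hv
    clear_value v
    have hvu : v < u := by simp [hv]; linarith
    have hv0 : 0 < v := by simp [hv]; linarith
    obtain ⟨c, hc, hceq⟩ := exists_hasDerivAt_eq_slope g g' hvu
      (hcont v u hv0 hu1)
      (fun x hx => hd1 x ⟨by linarith [hx.1], by linarith [hx.2]⟩)
    have husc : ustar < c := by have := hc.1; simp [hv] at this; linarith
    obtain ⟨d, hd, hdeq⟩ := exists_hasDerivAt_eq_slope g' g'' husc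
      (hcont' ustar c hus0 (by linarith [hc.2]))
      (fun x hx => hd2 x ⟨by linarith [hx.1], by linarith [hx.2, hc.2]⟩)
    have hdmem : d ∈ Set.Ioo (0:ℝ) 1 := ⟨by linarith [hd.1], by linarith [hd.2, hc.2]⟩
    have hne : c - ustar ≠ 0 := by have := hc.1; simp [hv] at this; intro hz; nlinarith
    have hgc : g' c = g'' d * (c - ustar) := by
      rw [hdeq, hg'0, sub_zero, div_mul_cancel₀ _ hne]
    have h1 : lam * (r/2) ≤ g' c := by
      rw [hgc]
      have := hlow d hdmem
      have hcu : r/2 ≤ c - ustar := by have := hc.1; simp [hv] at this; linarith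
      nlinarith
    have h2 : r/2 ≤ u - v := by simp [hv]; linarith
    have hneuv : u - v ≠ 0 := by intro hz; nlinarith
    have hguv : g u - g v = g' c * (u - v) := by
      rw [hceq, div_mul_cancel₀ _ hneuv]
    have h3 : lam * r^2 / 4 ≤ g' c * (u - v) := by
      nlinarith [mul_le_mul h1 h2 (by linarith : (0:ℝ) ≤ r/2) (le_trans (by positivity) h1)]
    have hvmem : v ∈ Set.Ioo (0:ℝ) 1 := ⟨hv0, by linarith⟩
    have := hminle v hvmem
    linarith
  · -- u ≤ ustar - r
    set v := ustar - r/2 with hv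
    clear_value v
    have hvu : u < v := by simp [hv]; linarith
    have hv1 : v < 1 := by simp [hv]; linarith
    obtain ⟨c, hc, hceq⟩ := exists_hasDerivAt_eq_slope g g' hvu
      (hcont u v hu0 hv1)
      (fun x hx => hd1 x ⟨by linarith [hx.1], by linarith [hx.2]⟩)
    have husc : c < ustar := by have := hc.2; simp [hv] at this; linarith
    obtain ⟨d, hd, hdeq⟩ := exists_hasDerivAt_eq_slope g' g'' husc
      (hcont' c ustar (by linarith [hc.1]) hus1)
      (fun x hx => hd2 x ⟨by linarith [hx.1, hc.1], by linarith [hx.2]⟩)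
    have hdmem : d ∈ Set.Ioo (0:ℝ) 1 := ⟨by linarith [hd.1, hc.1], by linarith [hd.2]⟩
    have hne : ustar - c ≠ 0 := by intro hz; nlinarith
    have hgc : g' c = -(g'' d * (ustar - c)) := by
      rw [hdeq, hg'0, zero_sub, neg_div, neg_mul, div_mul_cancel₀ _ hne, neg_neg]
    have h1 : g' c ≤ -(lam * (r/2)) := by
      rw [hgc]
      have := hlow d hdmem
      have hcu : r/2 ≤ ustar - c := by have := hc.2; simp [hv] at this; linarith
      nlinarith
    have h2 : r/2 ≤ v - u := by simp [hv]; linarith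
    have hnevu : v - u ≠ 0 := by intro hz; nlinarith
    have hguv : g v - g u = g' c * (v - u) := by
      rw [hceq, div_mul_cancel₀ _ hnevu]
    have h3 : g' c * (v - u) ≤ -(lam * r^2 / 4) := by
      have ha := mul_le_mul_of_nonneg_right h1 (by linarith : (0:ℝ) ≤ v - u)
      have hb := mul_le_mul_of_nonpos_left h2 (by nlinarith : -(lam * (r/2)) ≤ 0)
      nlinarith [ha, hb]
    have hvmem : v ∈ Set.Ioo (0:ℝ) 1 := ⟨by linarith, hv1⟩
    have := hminle v hvmem
    linarith

/-- Lemma D.1(iv): the Lebesgue measure of near-minimum sublevel sets of the reciprocal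
assessor tends to 0 as `ε → 0`, uniformly over a compact parameter set `K`. -/
theorem near_minimum_sublevel_uniformly_small (γl γr : ℝ) (hγl : 2 < γl) (hγr : 2 < γr)
    (K : Set (ℝ × ℝ × ℝ × ℝ)) (hK : IsCompact K) (hKsub : K ⊆ paramRegion) :
    ∀ η : ℝ, 0 < η →
      ∃ ε > (0 : ℝ), ∀ p ∈ K, ∀ ustar ∈ Set.Ioo (0 : ℝ) 1,
        (∀ u ∈ Set.Ioo (0 : ℝ) 1, u ≠ ustar →
          bAssessor γl γr p ustar < bAssessor γl γr p u) →
        (MeasureTheory.volume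
          {u : ℝ | u ∈ Set.Ioo (0 : ℝ) 1 ∧
            bAssessor γl γr p u < bAssessor γl γr p ustar + ε}).toReal < η := by
  intro η hη
  rcases K.eq_empty_or_nonempty with rfl | hne
  · exact ⟨1, one_pos, fun p hp => absurd hp (notMem_empty p)⟩
  have hγl0 : (0:ℝ) < γl := by linarith
  have hγr0 : (0:ℝ) < γr := by linarith
  -- uniform positive lower bounds on the mixture coefficients
  have hEl : ∃ C : ℝ, 0 < C ∧ ∀ q ∈ K, C ≤ clFn γl q := by
    obtain ⟨ql, hqlK, hqlmin⟩ := hK.exists_isMinOn hne (continuousOn_clFn γl hγl0 K hKsub)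
    obtain ⟨h1, h2, h3, h4, h5, h6, h7⟩ := hKsub hqlK
    exact ⟨clFn γl ql,
      div_pos (mul_pos h1 (inv_pos.2 (betaFn_pos h4 hγl0))) (by linarith),
      fun q hq => isMinOn_iff.mp hqlmin q hq⟩
  have hEr : ∃ C : ℝ, 0 < C ∧ ∀ q ∈ K, C ≤ crFn γr q := by
    obtain ⟨qr, hqrK, hqrmin⟩ := hK.exists_isMinOn hne (continuousOn_crFn γr hγr0 K hKsub)
    obtain ⟨h1, h2, h3, h4, h5, h6, h7⟩ := hKsub hqrK
    exact ⟨crFn γr qr,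
      div_pos (mul_pos h2 (inv_pos.2 (betaFn_pos hγr0 h6))) (by linarith),
      fun q hq => isMinOn_iff.mp hqrmin q hq⟩
  have hEdl : ∃ d : ℝ, 0 < d ∧ ∀ q ∈ K, d ≤ 1 - q.2.2.1 := by
    obtain ⟨qk, hqkK, hqkmax⟩ := hK.exists_isMaxOn hne
      ((continuous_fst.comp (continuous_snd.comp continuous_snd)).continuousOn)
    obtain ⟨h1, h2, h3, h4, h5, h6, h7⟩ := hKsub hqkK
    exact ⟨1 - qk.2.2.1, by linarith,
      fun q hq => by have := isMaxOn_iff.mp hqkmax q hq; simp only [Function.comp_apply] at this; linarith⟩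
  have hEdr : ∃ d : ℝ, 0 < d ∧ ∀ q ∈ K, d ≤ 1 - q.2.2.2 := by
    obtain ⟨qk, hqkK, hqkmax⟩ := hK.exists_isMaxOn hne
      ((continuous_snd.comp (continuous_snd.comp continuous_snd)).continuousOn)
    obtain ⟨h1, h2, h3, h4, h5, h6, h7⟩ := hKsub hqkK
    exact ⟨1 - qk.2.2.2, by linarith,
      fun q hq => by have := isMaxOn_iff.mp hqkmax q hq; simp only [Function.comp_apply] at this; linarith⟩
  obtain ⟨Cl, hCl, hClle⟩ := hEl
  obtain ⟨Cr, hCr, hCrle⟩ := hEr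
  obtain ⟨dl, hdl, hdlle⟩ := hEdl
  obtain ⟨dr, hdr, hdrle⟩ := hEdr
  have hXl : (0:ℝ) < (2:ℝ)⁻¹ ^ (γl - 1) := Real.rpow_pos_of_pos (by norm_num) _
  have hXr : (0:ℝ) < (2:ℝ)⁻¹ ^ (γr - 1) := Real.rpow_pos_of_pos (by norm_num) _
  set lam := min (Cl * dl * ((2:ℝ)⁻¹ ^ (γl - 1))) (Cr * dr * ((2:ℝ)⁻¹ ^ (γr - 1))) with hlamdef
  have hlam : 0 < lam := lt_min (by positivity) (by positivity)
  clear_value lam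
  have hr : (0:ℝ) < η/4 := by linarith
  have hε : 0 < lam * (η/4)^2 / 8 :=
    div_pos (mul_pos hlam (pow_pos hr 2)) (by norm_num)
  refine ⟨lam * (η/4)^2 / 8, hε, ?_⟩
  intro p hp ustar hus hminp
  obtain ⟨hπl, hπr, hsum, hkl0, hkl1, hkr0, hkr1⟩ := hKsub hp
  have hclp0 : 0 < clFn γl p :=
    div_pos (mul_pos hπl (inv_pos.2 (betaFn_pos hkl0 hγl0))) (by linarith)
  have hcrp0 : 0 < crFn γr p :=
    div_pos (mul_pos hπr (inv_pos.2 (betaFn_pos hγr0 hkr0))) (by linarith)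
  have hclp : Cl ≤ clFn γl p := hClle p hp
  have hcrp : Cr ≤ crFn γr p := hCrle p hp
  have hdlp : dl ≤ 1 - p.2.2.1 := hdlle p hp
  have hdrp : dr ≤ 1 - p.2.2.2 := hdrle p hp
  have hfun : bAssessor γl γr p = fun u =>
      1 + (clFn γl p * Fab (p.2.2.1 - 1) (γl - 1) u
        + crFn γr p * Fab (γr - 1) (p.2.2.2 - 1) u) :=
    funext (bAssessor_eq γl γr p)
  have hd1 : ∀ u ∈ Set.Ioo (0:ℝ) 1, HasDerivAt (bAssessor γl γr p)
      (clFn γl p * D1ab (p.2.2.1 - 1) (γl - 1) u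
        + crFn γr p * D1ab (γr - 1) (p.2.2.2 - 1) u) u := by
    intro u hu
    rw [hfun]
    exact (((hasDerivAt_Fab _ _ hu.1 hu.2).const_mul _).add
      ((hasDerivAt_Fab _ _ hu.1 hu.2).const_mul _)).const_add 1
  have hd2 : ∀ u ∈ Set.Ioo (0:ℝ) 1, HasDerivAt
      (fun x => clFn γl p * D1ab (p.2.2.1 - 1) (γl - 1) x
        + crFn γr p * D1ab (γr - 1) (p.2.2.2 - 1) x)
      (clFn γl p * D2ab (p.2.2.1 - 1) (γl - 1) u
        + crFn γr p * D2ab (γr - 1) (p.2.2.2 - 1) u) u := fun u hu =>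
    ((hasDerivAt_D1ab _ _ hu.1 hu.2).const_mul _).add
      ((hasDerivAt_D1ab _ _ hu.1 hu.2).const_mul _)
  have hlow : ∀ u ∈ Set.Ioo (0:ℝ) 1,
      lam ≤ clFn γl p * D2ab (p.2.2.1 - 1) (γl - 1) u
        + crFn γr p * D2ab (γr - 1) (p.2.2.2 - 1) u := by
    intro u hu
    rcases le_total u (1/2) with hhalf | hhalf
    · have hL := D2ab_ge_left (a := p.2.2.1 - 1) (b := γl - 1)
        (by linarith) (by linarith) hu.1 hhalf
      have e1 : (1 - p.2.2.1) * ((2:ℝ)⁻¹ ^ (γl - 1)) ≤ D2ab (p.2.2.1 - 1) (γl - 1) u := by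
        have hrw : -(p.2.2.1 - 1) = 1 - p.2.2.1 := by ring
        rwa [hrw] at hL
      have hR : 0 ≤ D2ab (γr - 1) (p.2.2.2 - 1) u :=
        D2ab_nonneg (Or.inr ⟨by linarith, by linarith⟩) hu.1 hu.2
      have c1 : Cl * (dl * ((2:ℝ)⁻¹ ^ (γl - 1))) ≤
          clFn γl p * ((1 - p.2.2.1) * ((2:ℝ)⁻¹ ^ (γl - 1))) :=
        mul_le_mul hclp (mul_le_mul_of_nonneg_right hdlp hXl.le)
          (mul_nonneg hdl.le hXl.le) hclp0.le
      have c2 : clFn γl p * ((1 - p.2.2.1) * ((2:ℝ)⁻¹ ^ (γl - 1))) ≤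
          clFn γl p * D2ab (p.2.2.1 - 1) (γl - 1) u :=
        mul_le_mul_of_nonneg_left e1 hclp0.le
      have c3 : 0 ≤ crFn γr p * D2ab (γr - 1) (p.2.2.2 - 1) u :=
        mul_nonneg hcrp0.le hR
      have c0 : lam ≤ Cl * dl * ((2:ℝ)⁻¹ ^ (γl - 1)) := hlamdef ▸ min_le_left _ _
      have crw : Cl * dl * ((2:ℝ)⁻¹ ^ (γl - 1)) = Cl * (dl * ((2:ℝ)⁻¹ ^ (γl - 1))) := by ring
      linarith
    · have hR := D2ab_ge_right (a := γr - 1) (b := p.2.2.2 - 1)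
        (by linarith) (by linarith) hhalf hu.2
      have e1 : (1 - p.2.2.2) * ((2:ℝ)⁻¹ ^ (γr - 1)) ≤ D2ab (γr - 1) (p.2.2.2 - 1) u := by
        have hrw : -(p.2.2.2 - 1) = 1 - p.2.2.2 := by ring
        rwa [hrw] at hR
      have hL : 0 ≤ D2ab (p.2.2.1 - 1) (γl - 1) u :=
        D2ab_nonneg (Or.inl ⟨by linarith, by linarith⟩) hu.1 hu.2
      have c1 : Cr * (dr * ((2:ℝ)⁻¹ ^ (γr - 1))) ≤
          crFn γr p * ((1 - p.2.2.2) * ((2:ℝ)⁻¹ ^ (γr - 1))) :=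
        mul_le_mul hcrp (mul_le_mul_of_nonneg_right hdrp hXr.le)
          (mul_nonneg hdr.le hXr.le) hcrp0.le
      have c2 : crFn γr p * ((1 - p.2.2.2) * ((2:ℝ)⁻¹ ^ (γr - 1))) ≤
          crFn γr p * D2ab (γr - 1) (p.2.2.2 - 1) u :=
        mul_le_mul_of_nonneg_left e1 hcrp0.le
      have c3 : 0 ≤ clFn γl p * D2ab (p.2.2.1 - 1) (γl - 1) u :=
        mul_nonneg hclp0.le hL
      have c0 : lam ≤ Cr * dr * ((2:ℝ)⁻¹ ^ (γr - 1)) := hlamdef ▸ min_le_right _ _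
      have crw : Cr * dr * ((2:ℝ)⁻¹ ^ (γr - 1)) = Cr * (dr * ((2:ℝ)⁻¹ ^ (γr - 1))) := by ring
      linarith
  have key := strong_min_bound (bAssessor γl γr p)
    (fun u => clFn γl p * D1ab (p.2.2.1 - 1) (γl - 1) u
      + crFn γr p * D1ab (γr - 1) (p.2.2.2 - 1) u)
    (fun u => clFn γl p * D2ab (p.2.2.1 - 1) (γl - 1) u
      + crFn γr p * D2ab (γr - 1) (p.2.2.2 - 1) u)
    lam hlam.le hd1 hd2 hlow hus hminp hr
  have hSsub : {u : ℝ | u ∈ Set.Ioo (0:ℝ) 1 ∧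
      bAssessor γl γr p u < bAssessor γl γr p ustar + lam * (η/4)^2 / 8} ⊆
      Set.Ioo (ustar - η/4) (ustar + η/4) := by
    intro u hu
    obtain ⟨huI, hult⟩ := hu
    by_contra hnot
    have habs : η/4 ≤ |u - ustar| := by
      simp only [mem_Ioo, not_and_or, not_lt] at hnot
      rcases hnot with h | h
      · rw [abs_sub_comm]
        exact le_abs.mpr (Or.inl (by linarith))
      · exact le_abs.mpr (Or.inl (by linarith))
    have hlb := key u huI habs
    have hq : 0 < lam * (η/4)^2 := mul_pos hlam (pow_pos hr 2)
    linarith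
  have hmle : volume {u : ℝ | u ∈ Set.Ioo (0:ℝ) 1 ∧
      bAssessor γl γr p u < bAssessor γl γr p ustar + lam * (η/4)^2 / 8} ≤
      ENNReal.ofReal (η/2) := by
    refine le_trans (measure_mono hSsub) ?_
    rw [Real.volume_Ioo]
    apply ENNReal.ofReal_le_ofReal
    linarith
  calc (volume {u : ℝ | u ∈ Set.Ioo (0:ℝ) 1 ∧
      bAssessor γl γr p u < bAssessor γl γr p ustar + lam * (η/4)^2 / 8}).toReal
      ≤ (ENNReal.ofReal (η/2)).toReal := ENNReal.toReal_mono ENNReal.ofReal_ne_top hmle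
    _ = η/2 := ENNReal.toReal_ofReal (by linarith)
    _ < η := by linarith
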